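/- Let A ∈ ℝ^{m×n} have full column rank (so that AᵀA is invertible), and set A⁺ := (AᵀA)⁻¹Aᵀ, which is a left inverse of A. Consider the least-squares setting y = A x₀ + z, where x₀ ∈ ℝⁿ and the noise z is distributed according to some P ∈ P(ℝᵐ), and the ordinary least squares estimator x̂ := A⁺ y, so that x̂ − x₀ is distributed according to the pushforward (A⁺)_# P. Let P̂ ∈ P(ℝᵐ) and ε ≥ 0. If P ∈ B_ε^{ĉ}(P̂) with ĉ(u) = ‖u‖₂² the squared Euclidean norm cost on ℝᵐ, then the distribution Q := (A⁺)_# P of the estimation error x̂ − x₀ satisfies Q ∈ B_ε^{ĉ_A}((A⁺)_# P̂), where ĉ_A : ℝⁿ → [0,∞) is the translation-invariant cost ĉ_A(u) = ‖Au‖₂². -/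

import Mathlib

open MeasureTheory Matrix
open scoped ENNReal

noncomputable section

/-- The set of couplings of two measures. -/
def couplings {X : Type*} [MeasurableSpace X] (P Q : Measure X) :
    Set (Measure (X × X)) :=
  {γ | IsProbabilityMeasure γ ∧ γ.map Prod.fst = P ∧ γ.map Prod.snd = Q}

/-- Optimal transport discrepancy with transportation cost `c`. -/
def OTCost {X : Type*} [MeasurableSpace X] (c : X × X → ℝ≥0∞) (P Q : Measure X) : ℝ≥0∞ :=
  ⨅ γ ∈ couplings P Q, ∫⁻ x, c x ∂γ

/-- The optimal transport ambiguity set of radius `ε` around `P`, for cost `c`. -/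
def ambiguitySet {X : Type*} [MeasurableSpace X] (c : X × X → ℝ≥0∞) (ε : ℝ≥0∞)
    (P : Measure X) : Set (Measure X) :=
  {Q | IsProbabilityMeasure Q ∧ OTCost c P Q ≤ ε}

/-- Squared Euclidean norm, as a transportation cost kernel. -/
def sqEuclid {k : ℕ} (u : Fin k → ℝ) : ℝ≥0∞ :=
  ENNReal.ofReal (∑ i, (u i) ^ 2)

/-! A measurable map `f` pushes couplings of `P, Q` to couplings of `f_# P, f_# Q`, so a cost
`c'` with `c' (f x₁, f x₂) ≤ c (x₁, x₂)` can only shrink the transport discrepancy. For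
`f = A⁺` and `c' = ‖A(·₁ - ·₂)‖²`, the composite `A A⁺` is the orthogonal projection onto the
range of `A`, which contracts the Euclidean norm. -/

section Transport

variable {X Y : Type*} [MeasurableSpace X] [MeasurableSpace Y]

theorem map_prodMap_mem_couplings {f : X → Y} (hf : Measurable f) {P Q : Measure X}
    {γ : Measure (X × X)} (hγ : γ ∈ couplings P Q) :
    γ.map (Prod.map f f) ∈ couplings (P.map f) (Q.map f) := by
  obtain ⟨_, rfl, rfl⟩ := hγ
  refine ⟨Measure.isProbabilityMeasure_map (hf.prodMap hf).aemeasurable, ?_, ?_⟩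
  · rw [Measure.map_map measurable_fst (hf.prodMap hf), Measure.map_map hf measurable_fst]
    rfl
  · rw [Measure.map_map measurable_snd (hf.prodMap hf), Measure.map_map hf measurable_snd]
    rfl

theorem OTCost_map_le {f : X → Y} (hf : Measurable f) {c : X × X → ℝ≥0∞}
    {c' : Y × Y → ℝ≥0∞} (hc : ∀ x, c' (Prod.map f f x) ≤ c x) (P Q : Measure X) :
    OTCost c' (P.map f) (Q.map f) ≤ OTCost c P Q :=
  le_iInf₂ fun γ hγ =>
    calc OTCost c' (P.map f) (Q.map f)
        ≤ ∫⁻ y, c' y ∂γ.map (Prod.map f f) := iInf₂_le _ (map_prodMap_mem_couplings hf hγ)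
      _ ≤ ∫⁻ x, c' (Prod.map f f x) ∂γ := lintegral_map_le _ _
      _ ≤ ∫⁻ x, c x ∂γ := lintegral_mono hc

theorem map_mem_ambiguitySet {f : X → Y} (hf : Measurable f) {c : X × X → ℝ≥0∞}
    {c' : Y × Y → ℝ≥0∞} (hc : ∀ x, c' (Prod.map f f x) ≤ c x) {ε : ℝ≥0∞} {P Q : Measure X}
    (hQ : Q ∈ ambiguitySet c ε P) : Q.map f ∈ ambiguitySet c' ε (P.map f) :=
  have := hQ.1
  ⟨Measure.isProbabilityMeasure_map hf.aemeasurable, (OTCost_map_le hf hc P Q).trans hQ.2⟩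

end Transport

section Projection

variable {ι : Type*} [Fintype ι]

theorem dotProduct_mulVec_self_le_of_idempotent {M : Matrix ι ι ℝ} (hsymm : Mᵀ = M)
    (hidem : M * M = M) (v : ι → ℝ) : M *ᵥ v ⬝ᵥ M *ᵥ v ≤ v ⬝ᵥ v := by
  have horth : M *ᵥ v ⬝ᵥ (v - M *ᵥ v) = 0 := by
    rw [dotProduct_sub, dotProduct_mulVec, ← mulVec_transpose, hsymm, mulVec_mulVec, hidem,
      sub_self]
  have hpyth : v ⬝ᵥ v = M *ᵥ v ⬝ᵥ M *ᵥ v + (v - M *ᵥ v) ⬝ᵥ (v - M *ᵥ v) := by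
    rw [dotProduct_sub, sub_dotProduct, sub_dotProduct, dotProduct_comm v (M *ᵥ v)] at *
    linarith
  rw [hpyth, le_add_iff_nonneg_right]
  exact dotProduct_star_self_nonneg _

variable {R : Type*} [CommRing R]

-- Also true for singular `B`, whose `B⁻¹` is the junk value `0`.
theorem nonsing_inv_mul_mul_nonsing_inv [DecidableEq ι] (B : Matrix ι ι R) :
    B⁻¹ * B * B⁻¹ = B⁻¹ := by
  rcases B.nonsing_inv_cancel_or_zero with ⟨hinv, -⟩ | hzero
  · rw [hinv, Matrix.one_mul]
  · rw [hzero, Matrix.zero_mul, Matrix.zero_mul]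

variable {κ : Type*} [Fintype κ] [DecidableEq κ]

theorem transpose_mul_pinv (A : Matrix ι κ R) :
    (A * ((Aᵀ * A)⁻¹ * Aᵀ))ᵀ = A * ((Aᵀ * A)⁻¹ * Aᵀ) := by
  simp [transpose_mul, transpose_nonsing_inv, Matrix.mul_assoc]

theorem mul_pinv_mul_self (A : Matrix ι κ R) :
    A * ((Aᵀ * A)⁻¹ * Aᵀ) * (A * ((Aᵀ * A)⁻¹ * Aᵀ)) = A * ((Aᵀ * A)⁻¹ * Aᵀ) := by
  conv_rhs => rw [← nonsing_inv_mul_mul_nonsing_inv (Aᵀ * A)]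
  simp only [Matrix.mul_assoc]

end Projection

theorem sqEuclid_eq_ofReal_dotProduct {k : ℕ} (u : Fin k → ℝ) :
    sqEuclid u = ENNReal.ofReal (u ⬝ᵥ u) := by
  simp only [sqEuclid, dotProduct, sq]

theorem sqEuclid_mul_pinv_mulVec_le {m n : ℕ} (A : Matrix (Fin m) (Fin n) ℝ) (v : Fin m → ℝ) :
    sqEuclid ((A * ((Aᵀ * A)⁻¹ * Aᵀ)) *ᵥ v) ≤ sqEuclid v := by
  rw [sqEuclid_eq_ofReal_dotProduct, sqEuclid_eq_ofReal_dotProduct]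
  exact ENNReal.ofReal_le_ofReal <|
    dotProduct_mulVec_self_le_of_idempotent (transpose_mul_pinv A) (mul_pinv_mul_self A) v

theorem ols_ambiguity_general
    {m n : ℕ}
    (A : Matrix (Fin m) (Fin n) ℝ)
    (Ap : Matrix (Fin n) (Fin m) ℝ) (hAp : Ap = (Aᵀ * A)⁻¹ * Aᵀ)
    (P Phat : Measure (Fin m → ℝ))
    (ε : ℝ≥0∞)
    (hP : P ∈ ambiguitySet (fun x => sqEuclid (x.1 - x.2)) ε Phat) :
    P.map Ap.mulVec
      ∈ ambiguitySet (fun x => sqEuclid (A.mulVec x.1 - A.mulVec x.2)) ε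
          (Phat.map Ap.mulVec) := by
  refine map_mem_ambiguitySet (Continuous.measurable (by fun_prop)) (fun x => ?_) hP
  simpa only [Prod.map, ← mulVec_sub, mulVec_mulVec, hAp] using
    sqEuclid_mul_pinv_mulVec_le A (x.1 - x.2)

/-- Distributional uncertainty in the ordinary least squares estimator: if the noise
distribution `P` lies in the OT ambiguity set of radius `ε` (squared Euclidean cost) around
`P̂`, then the distribution `Q = (A⁺)_# P` of the estimation error `x̂ - x₀` (where
`y = A x₀ + z`, `z ∼ P`, and `x̂ = A⁺ y`, so that `x̂ - x₀ = A⁺ z`) lies in the OT ambiguity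
set of radius `ε` with cost `ĉ_A(u) = ‖Au‖₂²` around `(A⁺)_# P̂`. -/
theorem ols_ambiguity
    {m n : ℕ}
    (A : Matrix (Fin m) (Fin n) ℝ) (hA : IsUnit (Aᵀ * A))
    (Ap : Matrix (Fin n) (Fin m) ℝ) (hAp : Ap = (Aᵀ * A)⁻¹ * Aᵀ)
    (P Phat : Measure (Fin m → ℝ))
    [IsProbabilityMeasure P] [IsProbabilityMeasure Phat]
    (ε : ℝ≥0∞)
    (x₀ : Fin n → ℝ) (z : (Fin m → ℝ)) (y : Fin m → ℝ) (hy : y = A.mulVec x₀ + z)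
    (hP : P ∈ ambiguitySet (fun x => sqEuclid (x.1 - x.2)) ε Phat) :
    P.map Ap.mulVec
      ∈ ambiguitySet (fun x => sqEuclid (A.mulVec x.1 - A.mulVec x.2)) ε
          (Phat.map Ap.mulVec) :=
  ols_ambiguity_general A Ap hAp P Phat ε hP
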